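/- arXiv:2508.17015 — 5 statements merged into one kernel-verified Lean document; each statement's English description precedes it below -/
import Mathlib

section
/- Let u^{(r)}, v^{(r)} : [0,∞) → ℝ be continuous functions for each r ∈ (0,1) and let m^{(r)} ∈ ℝ. Assume: (i) u^{(r)}(0) = 0 for all r and u^{(r)} → u u.o.c. as r → 0⁺ for some continuous u; (ii) v^{(r)}(0) = 0 and v^{(r)} is nondecreasing on [0,∞) for each r; (iii) m^{(r)} → ∞ as r → 0⁺. Define x^{(r)}(t) = u^{(r)}(t) − v^{(r)}(t) − m^{(r)}·t and z^{(r)} = Φ(x^{(r)}), i.e. z^{(r)}(t) = x^{(r)}(t) + sup_{0 ≤ s ≤ t} max(−x^{(r)}(s), 0). Then z^{(r)} → 0 u.o.c. as r → 0⁺, i.e. for every T > 0, sup_{0 ≤ t ≤ T} |z^{(r)}(t)| → 0 along the filter of r tending to 0 from the right. -/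
open Filter Topology

/-- One-dimensional Skorokhod reflection map:
`Φ(x)(t) = x(t) + sup_{0 ≤ s ≤ t} max(−x(s), 0)`. -/
noncomputable def phiMap (x : ℝ → ℝ) : ℝ → ℝ :=
  fun t => x t + ⨆ s : Set.Icc (0:ℝ) t, max (-(x s.1)) 0

lemma bdd_aux {f : ℝ → ℝ} (hf : Continuous f) (a b : ℝ) :
    BddAbove (Set.range fun t : Set.Icc a b => f t.1) := by
  rw [← Set.image_eq_range]
  exact (isCompact_Icc.image hf).bddAbove

theorem stmt0
    (u v : ℝ → ℝ → ℝ) (m : ℝ → ℝ) (ulim : ℝ → ℝ)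
    (hu_cont : ∀ r ∈ Set.Ioo (0:ℝ) 1, Continuous (u r))
    (hv_cont : ∀ r ∈ Set.Ioo (0:ℝ) 1, Continuous (v r))
    (hu0 : ∀ r ∈ Set.Ioo (0:ℝ) 1, u r 0 = 0)
    (hulim_cont : Continuous ulim)
    (huconv : ∀ T > 0, Filter.Tendsto
      (fun r => ⨆ t : Set.Icc (0:ℝ) T, |u r t.1 - ulim t.1|) (𝓝[>] 0) (𝓝 0))
    (hv0 : ∀ r ∈ Set.Ioo (0:ℝ) 1, v r 0 = 0)
    (hvmono : ∀ r ∈ Set.Ioo (0:ℝ) 1, MonotoneOn (v r) (Set.Ici (0:ℝ)))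
    (hm : Filter.Tendsto m (𝓝[>] 0) Filter.atTop)
    (x : ℝ → ℝ → ℝ)
    (hx : ∀ r t, x r t = u r t - v r t - m r * t)
    (z : ℝ → ℝ → ℝ)
    (hz : ∀ r, z r = phiMap (x r)) :
    ∀ T > 0, Filter.Tendsto
      (fun r => ⨆ t : Set.Icc (0:ℝ) T, |z r t.1|) (𝓝[>] 0) (𝓝 0) := by
  intro T hT
  haveI : Nonempty (Set.Icc (0:ℝ) T) := (Set.nonempty_Icc.2 hT.le).to_subtype
  rw [Metric.tendsto_nhds]
  intro ε hε
  -- bound M on |ulim| over [0,T]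
  obtain ⟨M, hM⟩ := isCompact_Icc.exists_bound_of_continuousOn
    (s := Set.Icc (0:ℝ) T) hulim_cont.continuousOn
  -- uniform continuity of ulim on [0,T]
  have huc := (isCompact_Icc (a := (0:ℝ)) (b := T)).uniformContinuousOn_of_continuous
    hulim_cont.continuousOn
  rw [Metric.uniformContinuousOn_iff] at huc
  obtain ⟨δ, hδ, hδprop⟩ := huc (ε/4) (by linarith)
  have h1 : ∀ᶠ r in 𝓝[>] (0:ℝ), r ∈ Set.Ioo (0:ℝ) 1 :=
    Ioo_mem_nhdsGT_of_mem (by constructor <;> norm_num)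
  have h2 : ∀ᶠ r in 𝓝[>] (0:ℝ),
      (⨆ t : Set.Icc (0:ℝ) T, |u r t.1 - ulim t.1|) < ε/8 :=
    (huconv T hT).eventually (gt_mem_nhds (by linarith))
  have h3 : ∀ᶠ r in 𝓝[>] (0:ℝ), max 0 ((2*M+ε)/δ) ≤ m r :=
    hm.eventually (eventually_ge_atTop _)
  filter_upwards [h1, h2, h3] with r hr hsup hmr
  have hxc : Continuous (x r) := by
    have hxeq : x r = fun t => u r t - v r t - m r * t := funext (hx r)
    rw [hxeq]
    exact ((hu_cont r hr).sub (hv_cont r hr)).sub (continuous_const.mul continuous_id)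
  have hx0 : x r 0 = 0 := by rw [hx, hu0 r hr, hv0 r hr]; ring
  have hmr0 : 0 ≤ m r := le_trans (le_max_left _ _) hmr
  have hmrδ : 2*M + ε ≤ m r * δ := by
    have h' : (2*M+ε)/δ ≤ m r := le_trans (le_max_right _ _) hmr
    calc 2*M + ε = (2*M+ε)/δ * δ := by field_simp
    _ ≤ m r * δ := mul_le_mul_of_nonneg_right h' hδ.le
  -- pointwise bound on |u r - ulim|
  have hub : ∀ t ∈ Set.Icc (0:ℝ) T, |u r t - ulim t| < ε/8 := by
    intro t ht
    refine lt_of_le_of_lt ?_ hsup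
    exact le_ciSup (bdd_aux (((hu_cont r hr).sub hulim_cont).abs) 0 T) ⟨t, ht⟩
  -- the key increment estimate
  have hclaim : ∀ s t : ℝ, 0 ≤ s → s ≤ t → t ≤ T → x r t - x r s ≤ ε/2 := by
    intro s t hs hst htT
    have hsI : s ∈ Set.Icc (0:ℝ) T := ⟨hs, le_trans hst htT⟩
    have htI : t ∈ Set.Icc (0:ℝ) T := ⟨le_trans hs hst, htT⟩
    have hvmon : 0 ≤ v r t - v r s := sub_nonneg.2 (hvmono r hr hsI.1 htI.1 hst)
    have hxeq : x r t - x r s = (u r t - u r s) - (v r t - v r s) - m r * (t - s) := by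
      rw [hx, hx]; ring
    have h1' := abs_lt.1 (hub t htI)
    have h2' := abs_lt.1 (hub s hsI)
    rcases lt_or_ge (t - s) δ with hcase | hcase
    · have h3' : dist (ulim t) (ulim s) < ε/4 :=
        hδprop t htI s hsI (by rw [Real.dist_eq, abs_of_nonneg (by linarith)]; exact hcase)
      rw [Real.dist_eq] at h3'
      have h4' := abs_lt.1 h3'
      have hm1 : 0 ≤ m r * (t - s) := mul_nonneg hmr0 (by linarith)
      rw [hxeq]; linarith
    · have hMt := abs_le.1 (by have := hM t htI; rwa [Real.norm_eq_abs] at this)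
      have hMs := abs_le.1 (by have := hM s hsI; rwa [Real.norm_eq_abs] at this)
      have hmts : m r * δ ≤ m r * (t - s) := mul_le_mul_of_nonneg_left hcase hmr0
      rw [hxeq]; linarith
  -- pointwise bound on |z r|
  have hz0 : ∀ t : Set.Icc (0:ℝ) T, |z r t.1| ≤ ε/2 := by
    rintro ⟨t, ht⟩
    haveI : Nonempty (Set.Icc (0:ℝ) t) := (Set.nonempty_Icc.2 ht.1).to_subtype
    have hbdd : BddAbove (Set.range fun s : Set.Icc (0:ℝ) t => max (-(x r s.1)) 0) :=
      bdd_aux (hxc.neg.max continuous_const) 0 t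
    have hS1 : (⨆ s : Set.Icc (0:ℝ) t, max (-(x r s.1)) 0) ≤ ε/2 - x r t := by
      apply ciSup_le
      rintro ⟨s, hs⟩
      rw [max_le_iff]
      constructor
      · have := hclaim s t hs.1 hs.2 ht.2; simp only; linarith
      · have := hclaim 0 t le_rfl ht.1 ht.2; rw [hx0] at this; linarith
    have hS2 : max (-(x r t)) 0 ≤ ⨆ s : Set.Icc (0:ℝ) t, max (-(x r s.1)) 0 :=
      le_ciSup hbdd ⟨t, ht.1, le_rfl⟩
    have hzt : z r t = x r t + ⨆ s : Set.Icc (0:ℝ) t, max (-(x r s.1)) 0 := by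
      rw [hz]; rfl
    rw [hzt, abs_le]
    constructor
    · have : -(x r t) ≤ max (-(x r t)) 0 := le_max_left _ _
      linarith
    · linarith
  have hsupz : (⨆ t : Set.Icc (0:ℝ) T, |z r t.1|) ≤ ε/2 := ciSup_le hz0
  have hbddT : BddAbove (Set.range fun t : Set.Icc (0:ℝ) T => |z r t.1|) := by
    refine ⟨ε/2, ?_⟩
    rintro _ ⟨t, rfl⟩
    exact hz0 t
  have hsupz0 : 0 ≤ ⨆ t : Set.Icc (0:ℝ) T, |z r t.1| :=
    le_trans (abs_nonneg _) (le_ciSup hbddT ⟨0, le_rfl, hT.le⟩)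
  rw [Real.dist_eq, sub_zero, abs_of_nonneg hsupz0]
  linarith
end

section
/- Let J ≥ 1, let P be a J×J real matrix, and fix j ∈ {1,…,J} such that I − P_{j−1} is invertible, where P_{j−1} := P_{[1:j−1],[1:j−1]}. Define w_{ij} for 1 ≤ i ≤ J by (w_{1j},…,w_{j−1,j})ᵀ = (I − P_{j−1})^{−1} P_{[1:j−1],j} and (w_{jj},…,w_{Jj})ᵀ = P_{[j:J],j} + P_{[j:J],[1:j−1]} (I − P_{j−1})^{−1} P_{[1:j−1],j}, and define u ∈ ℝ^J by u_i = w_{ij} for i < j, u_j = 1, and u_i = 0 for i > j. Then for every i ∈ {1,…,J}: Σ_{k=1}^{J} P_{ik} u_k = w_{ij}. -/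
open Matrix

/-- The coefficients `w_{i j}` defined from the routing matrix `P` at index `j`
(0-based indices: the block `[1:j−1]` of the paper is `{i : i.1 < j.1}`):
for `i < j`, `w_i = ((I − P_{j−1})⁻¹ P_{[1:j−1],j})_i`, and for `i ≥ j`,
`w_i = P_{i j} + (P_{i,[1:j−1]} (I − P_{j−1})⁻¹ P_{[1:j−1],j})`. -/
noncomputable def wVec {J : ℕ} (P : Matrix (Fin J) (Fin J) ℝ) (j : Fin J) : Fin J → ℝ :=
  fun i =>
    let v : Fin j.1 → ℝ :=
      (1 - P.submatrix (Fin.castLE j.2.le) (Fin.castLE j.2.le))⁻¹ *ᵥ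
        (fun a => P (Fin.castLE j.2.le a) j)
    if h : i.1 < j.1 then v ⟨i.1, h⟩
    else P i j + ∑ a : Fin j.1, P i (Fin.castLE j.2.le a) * v a

/-- The vector `u = (w_{1j}, …, w_{j−1,j}, 1, 0, …, 0)`. -/
noncomputable def uVec {J : ℕ} (P : Matrix (Fin J) (Fin J) ℝ) (j : Fin J) : Fin J → ℝ :=
  fun i => if i.1 < j.1 then wVec P j i else if i = j then 1 else 0

theorem stmt8 (J : ℕ) (hJ : 1 ≤ J) (P : Matrix (Fin J) (Fin J) ℝ) (j : Fin J)
    (hinv : IsUnit (1 - P.submatrix (Fin.castLE j.2.le) (Fin.castLE j.2.le)).det) :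
    ∀ i : Fin J, ∑ k : Fin J, P i k * uVec P j k = wVec P j i := by
  intro i
  set Q := P.submatrix (Fin.castLE j.2.le) (Fin.castLE j.2.le) with hQ
  set c : Fin j.1 → ℝ := fun a => P (Fin.castLE j.2.le a) j with hc
  set v : Fin j.1 → ℝ := (1 - Q)⁻¹ *ᵥ c with hv
  have hvc : v - Q *ᵥ v = c := by
    have : (1 - Q) *ᵥ v = c := by
      rw [hv, Matrix.mulVec_mulVec, Matrix.mul_nonsing_inv _ hinv, Matrix.one_mulVec]
    rwa [Matrix.sub_mulVec, Matrix.one_mulVec] at this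
  have hkey : ∀ a : Fin j.1, v a = c a + ∑ b : Fin j.1, Q a b * v b := by
    intro a
    have := congrFun hvc a
    simp only [Pi.sub_apply, Matrix.mulVec, dotProduct] at this
    linarith
  have hw : wVec P j = fun i => if h : i.1 < j.1 then v ⟨i.1, h⟩
      else P i j + ∑ a : Fin j.1, P i (Fin.castLE j.2.le a) * v a := by
    funext i
    simp only [wVec, hv, hQ, hc]
  -- rewrite each summand
  have hu : ∀ k : Fin J, P i k * uVec P j k =
      (if h : k.1 < j.1 then P i k * v ⟨k.1, h⟩ else 0) + (if k = j then P i j else 0) := by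
    intro k
    by_cases h : k.1 < j.1
    · have hkj : k ≠ j := by intro e; subst e; exact lt_irrefl _ h
      simp [uVec, hw, h, hkj]
    · by_cases hk : k = j
      · subst hk; simp [uVec, h]
      · simp [uVec, h, hk]
  rw [Finset.sum_congr rfl (fun k _ => hu k), Finset.sum_add_distrib]
  have h2 : ∑ k : Fin J, (if k = j then P i j else 0) = P i j := by
    simp [Finset.sum_ite_eq']
  -- the dite sum
  set F : ℕ → ℝ := fun m => if h : m < j.1 then P i ⟨m, h.trans j.2⟩ * v ⟨m, h⟩ else 0 with hF
  have h1 : ∑ k : Fin J, (if h : k.1 < j.1 then P i k * v ⟨k.1, h⟩ else 0)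
      = ∑ a : Fin j.1, P i (Fin.castLE j.2.le a) * v a := by
    have l1 : ∑ k : Fin J, (if h : k.1 < j.1 then P i k * v ⟨k.1, h⟩ else 0)
        = ∑ m ∈ Finset.range J, F m := by
      rw [← Fin.sum_univ_eq_sum_range F J]
    have l2 : ∑ m ∈ Finset.range J, F m = ∑ m ∈ Finset.range j.1, F m := by
      refine (Finset.sum_subset (Finset.range_subset_range.2 j.2.le) ?_).symm
      intro m _ hm
      simp only [Finset.mem_range, not_lt] at hm
      simp [hF, Nat.not_lt.2 hm]
    have l3 : ∑ m ∈ Finset.range j.1, F m = ∑ a : Fin j.1, P i (Fin.castLE j.2.le a) * v a := by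
      rw [← Fin.sum_univ_eq_sum_range F j.1]
      refine Finset.sum_congr rfl fun a _ => ?_
      simp only [hF, dif_pos a.2]
      rfl
    rw [l1, l2, l3]
  rw [h1, h2, hw]
  by_cases h : i.1 < j.1
  · simp only [h, dif_pos]
    have := hkey ⟨i.1, h⟩
    rw [this]
    simp only [hc, hQ, Matrix.submatrix_apply]
    have : Fin.castLE j.2.le ⟨i.1, h⟩ = i := rfl
    rw [this]
    ring
  · simp only [dif_neg h]
    ring
end

section
/- Let J ≥ 1, let P be a J×J real matrix, and fix j ∈ {1,…,J} such that I − P_{j−1} is invertible, where P_{j−1} := P_{[1:j−1],[1:j−1]}. Define w_{ij} (1 ≤ i ≤ J) and the vector u ∈ ℝ^J as follows: (w_{1j},…,w_{j−1,j})ᵀ = (I − P_{j−1})^{−1} P_{[1:j−1],j}, (w_{jj},…,w_{Jj})ᵀ = P_{[j:J],j} + P_{[j:J],[1:j−1]} (I − P_{j−1})^{−1} P_{[1:j−1],j}, and u_i = w_{ij} for i < j, u_j = 1, u_i = 0 for i > j. Suppose α, λ ∈ ℝ^J satisfy the traffic equations λ_m = α_m + Σ_{i=1}^{J} λ_i P_{im}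 for every m ∈ {1,…,J}. Then Σ_{i=1}^{J} α_i u_i = Σ_{i=1}^{J} λ_i u_i − Σ_{i=1}^{J} λ_i w_{ij}. -/
open Matrix

/- Since `u` agrees with `w` above row `j`,
`P u = P_{·,j} + P_{·,[1:j−1]} (I − P_{j−1})⁻¹ P_{[1:j−1],j}`. In rows `i ≥ j` this is `w` by
definition; in rows `i < j` it is `w` because `x = (I − P_{j−1})⁻¹ c` solves `x = c + P_{j−1} x`
(with `c = P_{[1:j−1],j}`).
Hence `P u = w`, and pairing the traffic equations `α = λ − Pᵀ λ` with `u` gives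
`α ⬝ u = λ ⬝ u − λ ⬝ P u = λ ⬝ u − λ ⬝ w`. -/

theorem Matrix.dotProduct_eq_sub_of_eq_add_vecMul {R n : Type*} [CommRing R] [Fintype n]
    {P : Matrix n n R} {α μ : n → R} (h : μ = α + μ ᵥ* P) (u : n → R) :
    α ⬝ᵥ u = μ ⬝ᵥ u - μ ⬝ᵥ (P *ᵥ u) := by
  rw [dotProduct_mulVec, ← sub_dotProduct, eq_sub_of_add_eq h.symm]

theorem Matrix.one_sub_inv_mulVec_eq_add {R n : Type*} [CommRing R] [Fintype n] [DecidableEq n]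
    {Q : Matrix n n R} (hQ : IsUnit (1 - Q).det) (c : n → R) :
    (1 - Q)⁻¹ *ᵥ c = c + Q *ᵥ ((1 - Q)⁻¹ *ᵥ c) := by
  have h : (1 - Q) *ᵥ ((1 - Q)⁻¹ *ᵥ c) = c := by
    rw [mulVec_mulVec, mul_nonsing_inv _ hQ, one_mulVec]
  rw [sub_mulVec, one_mulVec] at h
  exact eq_add_of_sub_eq h

theorem Fin.sum_mul_dite_lt {R : Type*} [NonUnitalNonAssocSemiring R] {k n : ℕ} (hk : k ≤ n)
    (g : Fin n → R) (f : Fin k → R) :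
    ∑ m : Fin n, g m * (if h : m.1 < k then f ⟨m.1, h⟩ else 0) =
      ∑ a : Fin k, g (a.castLE hk) * f a := by
  refine (Fintype.sum_of_injective _ (Fin.castLE_injective hk) _ _ ?_ fun a => ?_).symm
  · rintro m hm
    have : ¬ m.1 < k := fun h => hm ⟨⟨m.1, h⟩, rfl⟩
    simp [this]
  · simp

section wVec

variable {J : ℕ} (P : Matrix (Fin J) (Fin J) ℝ) (j : Fin J)

noncomputable def wHead : Fin j.1 → ℝ :=
  (1 - P.submatrix (Fin.castLE j.2.le) (Fin.castLE j.2.le))⁻¹ *ᵥ fun a => P (a.castLE j.2.le) j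

theorem wVec_of_lt {i : Fin J} (h : i.1 < j.1) : wVec P j i = wHead P j ⟨i.1, h⟩ := by
  simp only [wVec, dif_pos h]
  rfl

theorem wVec_of_not_lt {i : Fin J} (h : ¬ i.1 < j.1) :
    wVec P j i = P i j + ∑ a : Fin j.1, P i (a.castLE j.2.le) * wHead P j a := by
  simp only [wVec, dif_neg h]
  rfl

theorem wHead_eq_add
    (hinv : IsUnit (1 - P.submatrix (Fin.castLE j.2.le) (Fin.castLE j.2.le)).det) (a : Fin j.1) :
    wHead P j a =
      P (a.castLE j.2.le) j + ∑ b : Fin j.1, P (a.castLE j.2.le) (b.castLE j.2.le) * wHead P j b :=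
  congrFun (one_sub_inv_mulVec_eq_add hinv _) a

theorem uVec_eq_dite_add_ite (m : Fin J) :
    uVec P j m = (if h : m.1 < j.1 then wHead P j ⟨m.1, h⟩ else 0) + if m = j then 1 else 0 := by
  by_cases h : m.1 < j.1
  · have hne : m ≠ j := fun e => (e ▸ h).false
    simp [uVec, h, hne, wVec_of_lt P j h]
  · simp [uVec, h]

theorem mulVec_uVec_apply (i : Fin J) :
    (P *ᵥ uVec P j) i = P i j + ∑ a : Fin j.1, P i (a.castLE j.2.le) * wHead P j a := by
  simp only [mulVec, dotProduct, uVec_eq_dite_add_ite, mul_add, Finset.sum_add_distrib,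
    Fin.sum_mul_dite_lt j.2.le, mul_ite, mul_one, mul_zero, Finset.sum_ite_eq', Finset.mem_univ,
    if_true]
  ring

theorem mulVec_uVec
    (hinv : IsUnit (1 - P.submatrix (Fin.castLE j.2.le) (Fin.castLE j.2.le)).det) :
    P *ᵥ uVec P j = wVec P j := by
  funext i
  rw [mulVec_uVec_apply]
  by_cases h : i.1 < j.1
  · rw [wVec_of_lt P j h, wHead_eq_add P j hinv]
    rfl
  · rw [wVec_of_not_lt P j h]

end wVec

theorem stmt9_general (J : ℕ) (P : Matrix (Fin J) (Fin J) ℝ) (j : Fin J)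
    (hinv : IsUnit (1 - P.submatrix (Fin.castLE j.2.le) (Fin.castLE j.2.le)).det)
    (alpha lam : Fin J → ℝ)
    (htraffic : ∀ m : Fin J, lam m = alpha m + ∑ i : Fin J, lam i * P i m) :
    ∑ i : Fin J, alpha i * uVec P j i
      = ∑ i : Fin J, lam i * uVec P j i - ∑ i : Fin J, lam i * wVec P j i := by
  have h := dotProduct_eq_sub_of_eq_add_vecMul (P := P) (funext htraffic) (uVec P j)
  rwa [mulVec_uVec P j hinv] at h

theorem stmt9 (J : ℕ) (hJ : 1 ≤ J) (P : Matrix (Fin J) (Fin J) ℝ) (j : Fin J)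
    (hinv : IsUnit (1 - P.submatrix (Fin.castLE j.2.le) (Fin.castLE j.2.le)).det)
    (alpha lam : Fin J → ℝ)
    (htraffic : ∀ m : Fin J, lam m = alpha m + ∑ i : Fin J, lam i * P i m) :
    ∑ i : Fin J, alpha i * uVec P j i
      = ∑ i : Fin J, lam i * uVec P j i - ∑ i : Fin J, lam i * wVec P j i :=
  stmt9_general J P j hinv alpha lam htraffic
end

section
/- Let J ≥ 1, let P be a J×J real matrix, and fix j ∈ {1,…,J} such that I − P_{j−1} is invertible, where P_{j−1} := P_{[1:j−1],[1:j−1]}. Define w_{ij} (1 ≤ i ≤ J) and u ∈ ℝ^J by (w_{1j},…,w_{j−1,j})ᵀ = (I − P_{j−1})^{−1} P_{[1:j−1],j}, (w_{jj},…,w_{Jj})ᵀ = P_{[j:J],j} + P_{[j:J],[1:j−1]} (I − P_{j−1})^{−1} P_{[1:j−1],j}, u_i = w_{ij} for i < j, u_j = 1, u_i = 0 for i > j. Let α, λ ∈ ℝ^J satisfy the traffic equations λ_m = α_m + Σ_{i=1}^{J} λ_i P_{im} for every m, let c_{e,1}²,…,c_{e,J}², c_{s,1}²,…,c_{s,J}²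 be real numbers, and let Γ be the J×J matrix with entries Γ_{kℓ} = α_k c_{e,k}² δ_{kℓ} + Σ_{i=1}^{J} λ_i [ P_{ik}(δ_{kℓ} − P_{iℓ}) + c_{s,i}² (δ_{ik} − P_{ik})(δ_{iℓ} − P_{iℓ}) ], where δ is the Kronecker delta. Then uᵀ Γ u = Σ_{i<j} α_i ( w_{ij}² c_{e,i}² + w_{ij}(1 − w_{ij}) ) + α_j c_{e,j}² + Σ_{i>j} λ_i ( w_{ij}² c_{s,i}² + w_{ij}(1 − w_{ij}) ) + λ_j ( c_{s,j}² (1 − w_{jj})² + w_{jj}(1 − w_{jj}) ). -/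
open Matrix

lemma wVec_lt {J : ℕ} (P : Matrix (Fin J) (Fin J) ℝ) (j : Fin J) (i : Fin J) (h : i.1 < j.1) :
    wVec P j i = ((1 - P.submatrix (Fin.castLE j.2.le) (Fin.castLE j.2.le))⁻¹ *ᵥ
      (fun a => P (Fin.castLE j.2.le a) j)) ⟨i.1, h⟩ := by
  simp only [wVec]; rw [dif_pos h]

lemma wVec_ge {J : ℕ} (P : Matrix (Fin J) (Fin J) ℝ) (j : Fin J) (i : Fin J) (h : ¬ i.1 < j.1) :
    wVec P j i = P i j + ∑ a : Fin j.1, P i (Fin.castLE j.2.le a) *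
      ((1 - P.submatrix (Fin.castLE j.2.le) (Fin.castLE j.2.le))⁻¹ *ᵥ
        (fun a => P (Fin.castLE j.2.le a) j)) a := by
  simp only [wVec]; rw [dif_neg h]

/-- `uᵀ Γ u` equals the explicit variance `σ_j²` of the multi-scale heavy traffic limit.
Here `ce i` and `cs i` stand for the squared coefficients of variation
`c_{e,i}²` and `c_{s,i}²`. -/
theorem stmt10 (J : ℕ) (hJ : 1 ≤ J) (P : Matrix (Fin J) (Fin J) ℝ) (j : Fin J)
    (hinv : IsUnit (1 - P.submatrix (Fin.castLE j.2.le) (Fin.castLE j.2.le)).det)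
    (alpha lam ce cs : Fin J → ℝ)
    (htraffic : ∀ m : Fin J, lam m = alpha m + ∑ i : Fin J, lam i * P i m)
    (Γ : Matrix (Fin J) (Fin J) ℝ)
    (hΓ : ∀ k ℓ : Fin J, Γ k ℓ = alpha k * ce k * (if k = ℓ then (1:ℝ) else 0)
      + ∑ i : Fin J, lam i * (P i k * ((if k = ℓ then (1:ℝ) else 0) - P i ℓ)
          + cs i * ((if i = k then (1:ℝ) else 0) - P i k)
            * ((if i = ℓ then (1:ℝ) else 0) - P i ℓ))) :
    ∑ k : Fin J, ∑ ℓ : Fin J, uVec P j k * Γ k ℓ * uVec P j ℓ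
      = (∑ i ∈ Finset.univ.filter (fun i : Fin J => i < j),
          alpha i * ((wVec P j i) ^ 2 * ce i + wVec P j i * (1 - wVec P j i)))
        + alpha j * ce j
        + (∑ i ∈ Finset.univ.filter (fun i : Fin J => j < i),
            lam i * ((wVec P j i) ^ 2 * cs i + wVec P j i * (1 - wVec P j i)))
        + lam j * (cs j * (1 - wVec P j j) ^ 2 + wVec P j j * (1 - wVec P j j)) := by
  classical
  set w := wVec P j with hwdef
  set u := uVec P j with hudef
  set Q := P.submatrix (Fin.castLE j.2.le) (Fin.castLE j.2.le) with hQ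
  set v := (1 - Q)⁻¹ *ᵥ (fun a => P (Fin.castLE j.2.le a) j) with hvdef
  -- v satisfies the linear system
  have hveq : ∀ a : Fin j.1, v a = (∑ b, Q a b * v b) + P (Fin.castLE j.2.le a) j := by
    have h1 : (1 - Q) *ᵥ v = fun a => P (Fin.castLE j.2.le a) j := by
      rw [hvdef, Matrix.mulVec_mulVec, Matrix.mul_nonsing_inv _ hinv, Matrix.one_mulVec]
    intro a
    have h2 := congrFun h1 a
    simp only [Matrix.mulVec, dotProduct, Matrix.sub_apply, Matrix.one_apply, sub_mul,
      Finset.sum_sub_distrib, ite_mul, one_mul, zero_mul, Finset.sum_ite_eq] at h2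
    simp only [Finset.mem_univ, if_true] at h2
    linarith
  have hw_lt : ∀ a : Fin j.1, w (Fin.castLE j.2.le a) = v a := by
    intro a
    rw [hwdef, wVec_lt P j _ a.2]
    rfl
  have hfilt : ∀ f : Fin J → ℝ,
      ∑ k ∈ Finset.univ.filter (fun k : Fin J => k.1 < j.1), f k
        = ∑ a : Fin j.1, f (Fin.castLE j.2.le a) := by
    intro f
    have hm : Finset.univ.filter (fun k : Fin J => k.1 < j.1)
        = Finset.univ.map (Fin.castLEEmb j.2.le) := by
      ext k
      simp only [Finset.mem_filter, Finset.mem_univ, true_and, Finset.mem_map,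
        Fin.castLEEmb, Function.Embedding.coeFn_mk]
      constructor
      · intro h; exact ⟨⟨k.1, h⟩, rfl⟩
      · rintro ⟨a, rfl⟩; exact a.2
    rw [hm, Finset.sum_map]; rfl
  -- the key identity: (P u)_i = w_i for all i
  have hPu : ∀ i : Fin J, ∑ k, P i k * u k = w i := by
    intro i
    have hsplit : ∀ k : Fin J, P i k * u k
        = (if k.1 < j.1 then P i k * w k else 0) + (if k = j then P i j else 0) := by
      intro k
      by_cases h : k.1 < j.1
      · have hkj : k ≠ j := fun e => by rw [e] at h; exact lt_irrefl _ h
        rw [hudef]; simp [uVec, h, hkj, ← hwdef]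
      · by_cases h2 : k = j
        · rw [hudef]; simp [uVec, h, h2]
        · rw [hudef]; simp [uVec, h, h2]
    rw [Finset.sum_congr rfl fun k _ => hsplit k, Finset.sum_add_distrib,
      Finset.sum_ite_eq' Finset.univ j fun _ => P i j, ← Finset.sum_filter, hfilt]
    simp only [Finset.mem_univ, if_true, hw_lt]
    by_cases h : i.1 < j.1
    · have hwi : w i = v ⟨i.1, h⟩ := by rw [hwdef, wVec_lt P j i h]
      rw [hwi, hveq ⟨i.1, h⟩]
      rfl
    · rw [hwdef, wVec_ge P j i h]
      exact add_comm _ _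
  -- delta sums
  have hdeltaL : ∀ m : Fin J, ∑ ℓ, (if m = ℓ then (1:ℝ) else 0) * u ℓ = u m := by
    intro m; simp [ite_mul]
  have hkey : ∀ (m i : Fin J),
      ∑ ℓ, ((if m = ℓ then (1:ℝ) else 0) - P i ℓ) * u ℓ = u m - w i := by
    intro m i
    simp only [sub_mul, Finset.sum_sub_distrib, hdeltaL, hPu]
  -- column computation
  have hcol : ∀ k, ∑ ℓ, Γ k ℓ * u ℓ = alpha k * ce k * u k
      + ∑ i, lam i * (P i k * (u k - w i)
          + cs i * ((if i = k then (1:ℝ) else 0) - P i k) * (u i - w i)) := by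
    intro k
    have hterm : ∀ ℓ, Γ k ℓ * u ℓ
        = alpha k * ce k * ((if k = ℓ then (1:ℝ) else 0) * u ℓ)
          + ∑ i, (lam i * P i k * (((if k = ℓ then (1:ℝ) else 0) - P i ℓ) * u ℓ)
            + lam i * cs i * ((if i = k then (1:ℝ) else 0) - P i k)
              * (((if i = ℓ then (1:ℝ) else 0) - P i ℓ) * u ℓ)) := by
      intro ℓ
      rw [hΓ, add_mul, Finset.sum_mul]
      congr 1
      · ring
      · exact Finset.sum_congr rfl fun i _ => by ring
    rw [Finset.sum_congr rfl fun ℓ _ => hterm ℓ, Finset.sum_add_distrib]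
    congr 1
    · rw [← Finset.mul_sum, hdeltaL]
    · rw [Finset.sum_comm]
      refine Finset.sum_congr rfl fun i _ => ?_
      rw [Finset.sum_add_distrib, ← Finset.mul_sum, ← Finset.mul_sum, hkey, hkey]
      ring
  -- step 1
  have hstep1 : ∑ k, ∑ ℓ, u k * Γ k ℓ * u ℓ
      = (∑ k, alpha k * ce k * u k ^ 2)
        + ((∑ i, lam i * ∑ k, P i k * u k ^ 2)
          - (∑ i, lam i * w i ^ 2) + ∑ i, lam i * cs i * (u i - w i) ^ 2) := by
    have h1 : ∀ k, ∑ ℓ, u k * Γ k ℓ * u ℓ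
        = alpha k * ce k * u k ^ 2
          + ∑ i, (lam i * (P i k * u k * u k) - lam i * (P i k * u k) * w i
            + lam i * cs i * (((if i = k then (1:ℝ) else 0) - P i k) * u k) * (u i - w i)) := by
      intro k
      have h2 : ∑ ℓ, u k * Γ k ℓ * u ℓ = u k * ∑ ℓ, Γ k ℓ * u ℓ := by
        rw [Finset.mul_sum]; exact Finset.sum_congr rfl fun ℓ _ => by ring
      rw [h2, hcol, mul_add, Finset.mul_sum]
      congr 1
      · ring
      · exact Finset.sum_congr rfl fun i _ => by ring
    rw [Finset.sum_congr rfl fun k _ => h1 k, Finset.sum_add_distrib]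
    congr 1
    rw [Finset.sum_comm]
    have h3 : ∀ i, ∑ k, (lam i * (P i k * u k * u k) - lam i * (P i k * u k) * w i
          + lam i * cs i * (((if i = k then (1:ℝ) else 0) - P i k) * u k) * (u i - w i))
        = lam i * (∑ k, P i k * u k ^ 2) - lam i * w i ^ 2
            + lam i * cs i * (u i - w i) ^ 2 := by
      intro i
      rw [Finset.sum_add_distrib, Finset.sum_sub_distrib]
      have e1 : ∑ k, lam i * (P i k * u k * u k) = lam i * ∑ k, P i k * u k ^ 2 := by
        rw [Finset.mul_sum]; exact Finset.sum_congr rfl fun k _ => by ring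
      have e2 : ∑ k, lam i * (P i k * u k) * w i = lam i * w i ^ 2 := by
        have : ∑ k, lam i * (P i k * u k) * w i = lam i * w i * ∑ k, P i k * u k := by
          rw [Finset.mul_sum]; exact Finset.sum_congr rfl fun k _ => by ring
        rw [this, hPu]; ring
      have e3 : ∑ k, lam i * cs i * (((if i = k then (1:ℝ) else 0) - P i k) * u k) * (u i - w i)
          = lam i * cs i * (u i - w i) ^ 2 := by
        have : ∑ k, lam i * cs i * (((if i = k then (1:ℝ) else 0) - P i k) * u k) * (u i - w i)
            = lam i * cs i * (u i - w i) * ∑ k, ((if i = k then (1:ℝ) else 0) - P i k) * u k := by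
          rw [Finset.mul_sum]; exact Finset.sum_congr rfl fun k _ => by ring
        rw [this, hkey]; ring
      rw [e1, e2, e3]
    rw [Finset.sum_congr rfl fun i _ => h3 i, Finset.sum_add_distrib, Finset.sum_sub_distrib]
  -- traffic consequence
  have h0 : ∀ k, ∑ i, lam i * P i k = lam k - alpha k := by
    intro k; have := htraffic k; linarith
  have hsw : ∑ i, lam i * ∑ k, P i k * u k ^ 2 = ∑ k, (lam k - alpha k) * u k ^ 2 := by
    calc ∑ i, lam i * ∑ k, P i k * u k ^ 2
        = ∑ i, ∑ k, lam i * P i k * u k ^ 2 := Finset.sum_congr rfl fun i _ => by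
          rw [Finset.mul_sum]; exact Finset.sum_congr rfl fun k _ => by ring
      _ = ∑ k, ∑ i, lam i * P i k * u k ^ 2 := Finset.sum_comm
      _ = ∑ k, (lam k - alpha k) * u k ^ 2 := Finset.sum_congr rfl fun k _ => by
          rw [← Finset.sum_mul, h0]
  have hGlob : ∑ k, lam k * w k = ∑ k, (lam k - alpha k) * u k := by
    calc ∑ k, lam k * w k
        = ∑ k, lam k * ∑ m, P k m * u m := by simp only [hPu]
      _ = ∑ k, ∑ m, lam k * P k m * u m := Finset.sum_congr rfl fun k _ => by
          rw [Finset.mul_sum]; exact Finset.sum_congr rfl fun m _ => by ring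
      _ = ∑ m, ∑ k, lam k * P k m * u m := Finset.sum_comm
      _ = ∑ m, (lam m - alpha m) * u m := Finset.sum_congr rfl fun m _ => by
          rw [← Finset.sum_mul, h0]
  -- the target function Gf
  set Gf : Fin J → ℝ := fun k =>
    if k < j then alpha k * (w k ^ 2 * ce k + w k * (1 - w k))
    else if k = j then alpha j * ce j + lam j * (cs j * (1 - w j) ^ 2 + w j * (1 - w j))
    else lam k * (w k ^ 2 * cs k + w k * (1 - w k)) with hGf
  have hpoint : ∀ k, alpha k * ce k * u k ^ 2 + ((lam k - alpha k) * u k ^ 2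
        - lam k * w k ^ 2 + lam k * cs k * (u k - w k) ^ 2)
      = Gf k + (lam k * u k - lam k * w k - alpha k * u k) := by
    intro k
    rcases lt_trichotomy k j with h | h | h
    · have hk : u k = w k := by
        rw [hudef]; simp [uVec, Fin.lt_def.mp h, ← hwdef]
      rw [hGf]; simp only [if_pos h]
      rw [hk]; ring
    · subst h
      have hk : u k = 1 := by
        rw [hudef]; simp [uVec]
      have hGj : Gf k = alpha k * ce k + lam k * (cs k * (1 - w k) ^ 2 + w k * (1 - w k)) := by
        simp [hGf]
      rw [hGj, hk]; ring
    · have h1 : ¬ k.1 < j.1 := not_lt.mpr (Fin.lt_def.mp h).le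
      have h2 : k ≠ j := ne_of_gt h
      have hk : u k = 0 := by
        rw [hudef]; simp [uVec, h1, h2]
      rw [hGf]; simp only [if_neg (not_lt.mpr h.le), if_neg h2]
      rw [hk]; ring
  have hsum_eq : ∑ k, ∑ ℓ, u k * Γ k ℓ * u ℓ = ∑ k, Gf k := by
    rw [hstep1, hsw]
    have : (∑ k, alpha k * ce k * u k ^ 2)
        + ((∑ k, (lam k - alpha k) * u k ^ 2) - (∑ i, lam i * w i ^ 2)
          + ∑ i, lam i * cs i * (u i - w i) ^ 2)
      = ∑ k, (alpha k * ce k * u k ^ 2 + ((lam k - alpha k) * u k ^ 2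
          - lam k * w k ^ 2 + lam k * cs k * (u k - w k) ^ 2)) := by
      rw [Finset.sum_add_distrib, Finset.sum_add_distrib, Finset.sum_sub_distrib]
    rw [this, Finset.sum_congr rfl fun k _ => hpoint k, Finset.sum_add_distrib]
    have hz : ∑ k, (lam k * u k - lam k * w k - alpha k * u k) = 0 := by
      rw [Finset.sum_sub_distrib, Finset.sum_sub_distrib, hGlob]
      have : ∑ k, (lam k - alpha k) * u k = (∑ k, lam k * u k) - ∑ k, alpha k * u k := by
        rw [← Finset.sum_sub_distrib]
        exact Finset.sum_congr rfl fun k _ => by ring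
      rw [this]; ring
    rw [hz, add_zero]
  rw [hsum_eq]
  -- now split the sum of Gf
  have hsplit1 := Finset.sum_filter_add_sum_filter_not Finset.univ (fun k : Fin J => k < j) Gf
  have hsplit2 := Finset.sum_filter_add_sum_filter_not
    (Finset.univ.filter (fun k : Fin J => ¬ k < j)) (fun k : Fin J => j < k) Gf
  have hset1 : (Finset.univ.filter (fun k : Fin J => ¬ k < j)).filter (fun k : Fin J => j < k)
      = Finset.univ.filter (fun k : Fin J => j < k) := by
    ext k
    simp only [Finset.mem_filter, Finset.mem_univ, true_and]
    constructor
    · rintro ⟨_, h⟩; exact h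
    · intro h; exact ⟨not_lt.mpr h.le, h⟩
  have hset2 : (Finset.univ.filter (fun k : Fin J => ¬ k < j)).filter (fun k : Fin J => ¬ j < k)
      = {j} := by
    ext k
    simp only [Finset.mem_filter, Finset.mem_univ, true_and, Finset.mem_singleton]
    constructor
    · rintro ⟨h1, h2⟩; exact le_antisymm (not_lt.mp h2) (not_lt.mp h1)
    · rintro rfl; exact ⟨lt_irrefl _, lt_irrefl _⟩
  rw [hset1, hset2, Finset.sum_singleton] at hsplit2
  rw [← hsplit2] at hsplit1
  rw [← hsplit1]
  have hA : ∑ k ∈ Finset.univ.filter (fun k : Fin J => k < j), Gf k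
      = ∑ i ∈ Finset.univ.filter (fun i : Fin J => i < j),
          alpha i * (w i ^ 2 * ce i + w i * (1 - w i)) := by
    refine Finset.sum_congr rfl fun k hk => ?_
    rw [hGf]
    simp only [if_pos (Finset.mem_filter.mp hk).2]
  have hB : ∑ k ∈ Finset.univ.filter (fun k : Fin J => j < k), Gf k
      = ∑ i ∈ Finset.univ.filter (fun i : Fin J => j < i),
          lam i * (w i ^ 2 * cs i + w i * (1 - w i)) := by
    refine Finset.sum_congr rfl fun k hk => ?_
    have h := (Finset.mem_filter.mp hk).2
    rw [hGf]
    simp only [if_neg (not_lt.mpr h.le), if_neg (ne_of_gt h)]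
  have hC : Gf j = alpha j * ce j + lam j * (cs j * (1 - w j) ^ 2 + w j * (1 - w j)) := by
    simp [hGf]
  rw [hA, hB, hC]
  ring
end

section
/- Let J ≥ 1, let P be a J×J real matrix, fix j ∈ {1,…,J}, and set R = I − Pᵀ. Assume the leading principal submatrix R_{j−1} := R_{[1:j−1],[1:j−1]} is invertible (equivalently, I − P_{j−1} is invertible with P_{j−1} := P_{[1:j−1],[1:j−1]}). Define w_{ij} (1 ≤ i ≤ j) from P by (w_{1j},…,w_{j−1,j})ᵀ = (I − P_{j−1})^{−1} P_{[1:j−1],j} and w_{jj} = (P_{[j:J],j} + P_{[j:J],[1:j−1]}(I − P_{j−1})^{−1} P_{[1:j−1],j})_1. Then: (a) −R_{j,[1:j−1]} (R_{j−1})^{−1} = (w_{1j}, …, w_{j−1,j}) as a row vector; (b) 1 − R_{jj} + R_{j,[1:j−1]} (R_{j−1})^{−1} R_{[1:j−1],j} = w_{jj}; and consequently, with E^{(j)} and G^{(j)} the block elimination matrices of R at index j, the j-th row of E^{(j)} equals (w_{1j}, …, w_{j−1,j}, 1, 0, …, 0) and G^{(j)}_{jj} = 1 − w_{jj}. -/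
open Matrix

/-- The block elimination matrix `E^{(k)} = [[I, 0], [−C A⁻¹, I]]` of `R` at index `k`
(0-based; for `k.1 = 0` it is the identity). -/
noncomputable def elimE {J : ℕ} (R : Matrix (Fin J) (Fin J) ℝ) (k : Fin J) :
    Matrix (Fin J) (Fin J) ℝ :=
  fun i m =>
    if i.1 < k.1 then (if i = m then 1 else 0)
    else if hm : m.1 < k.1 then
      -(∑ b : Fin k.1, R i (Fin.castLE k.2.le b) *
        ((R.submatrix (Fin.castLE k.2.le) (Fin.castLE k.2.le))⁻¹) b ⟨m.1, hm⟩)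
    else (if i = m then 1 else 0)

/-- The eliminated matrix `G^{(k)} = E^{(k)} R`. -/
noncomputable def elimG {J : ℕ} (R : Matrix (Fin J) (Fin J) ℝ) (k : Fin J) :
    Matrix (Fin J) (Fin J) ℝ :=
  elimE R k * R

theorem stmt11 (J : ℕ) (hJ : 1 ≤ J) (P : Matrix (Fin J) (Fin J) ℝ) (j : Fin J)
    (R : Matrix (Fin J) (Fin J) ℝ) (hRdef : R = 1 - Pᵀ)
    (hinv : IsUnit ((R.submatrix (Fin.castLE j.2.le) (Fin.castLE j.2.le)).det)) :
    (∀ a : Fin j.1,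
      -(∑ b : Fin j.1, R j (Fin.castLE j.2.le b) *
          ((R.submatrix (Fin.castLE j.2.le) (Fin.castLE j.2.le))⁻¹) b a)
        = wVec P j (Fin.castLE j.2.le a)) ∧
    (1 - R j j + ∑ a : Fin j.1, ∑ b : Fin j.1,
        R j (Fin.castLE j.2.le a) *
          ((R.submatrix (Fin.castLE j.2.le) (Fin.castLE j.2.le))⁻¹) a b *
          R (Fin.castLE j.2.le b) j
      = wVec P j j) ∧
    (∀ m : Fin J, elimE R j j m = uVec P j m) ∧
    (elimG R j j j = 1 - wVec P j j) := by
  subst hRdef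
  have hne : ∀ a : Fin j.1, Fin.castLE j.2.le a ≠ j := by
    intro a h
    have h1 := a.isLt
    have h2 := congrArg Fin.val h
    simp only [Fin.coe_castLE] at h2
    omega
  have hRsub : ((1 - Pᵀ : Matrix (Fin J) (Fin J) ℝ)).submatrix (Fin.castLE j.2.le)
      (Fin.castLE j.2.le) = (1 - P.submatrix (Fin.castLE j.2.le) (Fin.castLE j.2.le))ᵀ := by
    ext a b
    simp only [Matrix.submatrix_apply, Matrix.sub_apply, Matrix.transpose_apply,
      Matrix.one_apply]
    have h : (Fin.castLE j.2.le a = Fin.castLE j.2.le b) ↔ (b = a) := by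
      constructor
      · intro h; exact ((Fin.castLE_injective _ h)).symm
      · intro h; rw [h]
    rw [if_congr h rfl rfl]
  have hQ : ∀ a b : Fin j.1,
      (((1 - Pᵀ : Matrix (Fin J) (Fin J) ℝ).submatrix (Fin.castLE j.2.le)
        (Fin.castLE j.2.le))⁻¹) a b
      = ((1 - P.submatrix (Fin.castLE j.2.le) (Fin.castLE j.2.le))⁻¹) b a := by
    intro a b
    rw [hRsub, ← Matrix.transpose_nonsing_inv]
    rfl
  have hRj : ∀ b : Fin j.1, (1 - Pᵀ : Matrix (Fin J) (Fin J) ℝ) j (Fin.castLE j.2.le b)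
      = -(P (Fin.castLE j.2.le b) j) := by
    intro b
    simp [Matrix.sub_apply, Matrix.one_apply, (hne b).symm]
  have hRcol : ∀ b : Fin j.1, (1 - Pᵀ : Matrix (Fin J) (Fin J) ℝ) (Fin.castLE j.2.le b) j
      = -(P j (Fin.castLE j.2.le b)) := by
    intro b
    simp [Matrix.sub_apply, Matrix.one_apply, hne b]
  have hRjj : (1 - Pᵀ : Matrix (Fin J) (Fin J) ℝ) j j = 1 - P j j := by
    simp [Matrix.sub_apply, Matrix.one_apply]
  set Q := (1 - P.submatrix (Fin.castLE j.2.le) (Fin.castLE j.2.le))⁻¹ with hQdef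
  have hw_lt : ∀ a : Fin j.1, wVec P j (Fin.castLE j.2.le a)
      = ∑ b : Fin j.1, Q a b * P (Fin.castLE j.2.le b) j := by
    intro a
    have hlt : (Fin.castLE j.2.le a).1 < j.1 := a.isLt
    simp only [wVec]
    rw [dif_pos hlt]
    rfl
  have hw_j : wVec P j j
      = P j j + ∑ a : Fin j.1, P j (Fin.castLE j.2.le a) *
          (∑ b : Fin j.1, Q a b * P (Fin.castLE j.2.le b) j) := by
    simp only [wVec]
    rw [dif_neg (lt_irrefl j.1)]
    rfl
  -- part (a)
  have parta : ∀ a : Fin j.1,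
      -(∑ b : Fin j.1, (1 - Pᵀ : Matrix (Fin J) (Fin J) ℝ) j (Fin.castLE j.2.le b) *
          (((1 - Pᵀ : Matrix (Fin J) (Fin J) ℝ).submatrix (Fin.castLE j.2.le)
            (Fin.castLE j.2.le))⁻¹) b a)
        = wVec P j (Fin.castLE j.2.le a) := by
    intro a
    rw [hw_lt a, ← Finset.sum_neg_distrib]
    apply Finset.sum_congr rfl
    intro b _
    rw [hRj b, hQ b a]
    ring
  -- part (b)
  have partb : (1 - (1 - Pᵀ : Matrix (Fin J) (Fin J) ℝ) j j + ∑ a : Fin j.1, ∑ b : Fin j.1,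
        (1 - Pᵀ : Matrix (Fin J) (Fin J) ℝ) j (Fin.castLE j.2.le a) *
          (((1 - Pᵀ : Matrix (Fin J) (Fin J) ℝ).submatrix (Fin.castLE j.2.le)
            (Fin.castLE j.2.le))⁻¹) a b *
          (1 - Pᵀ : Matrix (Fin J) (Fin J) ℝ) (Fin.castLE j.2.le b) j
      = wVec P j j) := by
    rw [hw_j, hRjj]
    have hsum : (∑ a : Fin j.1, ∑ b : Fin j.1,
        (1 - Pᵀ : Matrix (Fin J) (Fin J) ℝ) j (Fin.castLE j.2.le a) *
          (((1 - Pᵀ : Matrix (Fin J) (Fin J) ℝ).submatrix (Fin.castLE j.2.le)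
            (Fin.castLE j.2.le))⁻¹) a b *
          (1 - Pᵀ : Matrix (Fin J) (Fin J) ℝ) (Fin.castLE j.2.le b) j)
        = ∑ b : Fin j.1, P j (Fin.castLE j.2.le b) *
            (∑ a : Fin j.1, Q b a * P (Fin.castLE j.2.le a) j) := by
      rw [Finset.sum_comm]
      apply Finset.sum_congr rfl
      intro b _
      rw [Finset.mul_sum]
      apply Finset.sum_congr rfl
      intro a _
      rw [hRj a, hRcol b, hQ a b]
      ring
    rw [hsum]
    ring
  -- part (c)
  have partc : ∀ m : Fin J, elimE (1 - Pᵀ) j j m = uVec P j m := by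
    intro m
    simp only [elimE, uVec]
    rw [if_neg (lt_irrefl j.1)]
    by_cases hm : m.1 < j.1
    · rw [dif_pos hm, if_pos hm]
      have h := parta ⟨m.1, hm⟩
      have hc : Fin.castLE j.2.le ⟨m.1, hm⟩ = m := by ext; rfl
      rw [hc] at h
      exact h
    · rw [dif_neg hm, if_neg hm]
      by_cases hmj : m = j
      · simp [hmj]
      · simp [hmj, Ne.symm hmj]
  -- part (d)
  have partd : elimG (1 - Pᵀ) j j j = 1 - wVec P j j := by
    have hG : elimG (1 - Pᵀ) j j j
        = ∑ m : Fin J, uVec P j m * (1 - Pᵀ : Matrix (Fin J) (Fin J) ℝ) m j := by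
      rw [elimG, Matrix.mul_apply]
      exact Finset.sum_congr rfl fun m _ => by rw [partc m]
    rw [hG]
    classical
    set s : Finset (Fin J) := Finset.univ.map (Fin.castLEEmb j.2.le) with hs
    have hmem : ∀ m : Fin J, m ∈ s ↔ m.1 < j.1 := by
      intro m
      simp only [hs, Finset.mem_map, Finset.mem_univ, true_and]
      constructor
      · rintro ⟨a, rfl⟩; exact a.isLt
      · intro h; exact ⟨⟨m.1, h⟩, by ext; rfl⟩
    have hsplit : ∑ m : Fin J, uVec P j m * (1 - Pᵀ : Matrix (Fin J) (Fin J) ℝ) m j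
        = (∑ a : Fin j.1, uVec P j (Fin.castLE j.2.le a) *
            (1 - Pᵀ : Matrix (Fin J) (Fin J) ℝ) (Fin.castLE j.2.le a) j)
          + uVec P j j * (1 - Pᵀ : Matrix (Fin J) (Fin J) ℝ) j j := by
      rw [← Finset.sum_add_sum_compl s]
      congr 1
      · rw [hs, Finset.sum_map]
        rfl
      · apply Finset.sum_eq_single_of_mem j
        · simp only [Finset.mem_compl, hmem]
          exact lt_irrefl j.1
        · intro m hm hmj
          have hnm : ¬ m.1 < j.1 := by
            rw [← hmem]
            simpa [Finset.mem_compl] using hm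
          simp [uVec, hnm, hmj]
    rw [hsplit]
    have hu_lt : ∀ a : Fin j.1, uVec P j (Fin.castLE j.2.le a) = wVec P j (Fin.castLE j.2.le a) := by
      intro a
      simp [uVec, a.isLt]
    have hu_j : uVec P j j = 1 := by
      simp [uVec]
    have hsum2 : (∑ a : Fin j.1, uVec P j (Fin.castLE j.2.le a) *
            (1 - Pᵀ : Matrix (Fin J) (Fin J) ℝ) (Fin.castLE j.2.le a) j)
        = -(∑ a : Fin j.1, P j (Fin.castLE j.2.le a) *
            (∑ b : Fin j.1, Q a b * P (Fin.castLE j.2.le b) j)) := by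
      rw [← Finset.sum_neg_distrib]
      apply Finset.sum_congr rfl
      intro a _
      rw [hu_lt a, hw_lt a, hRcol a]
      ring
    rw [hsum2, hu_j, hRjj, hw_j]
    ring
  exact ⟨parta, partb, partc, partd⟩
end
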